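/- arXiv:1502.01684 — 4 statements merged into one kernel-verified Lean document; each statement's English description precedes it below -/
import Mathlib

section
/- Suppose the density f is bounded and has no flat parts (Leb({f = c}) = 0 for all c ≥ 0). Then EM* is differentiable on (0, ‖f‖∞) with derivative EM*'(t) = −λ(t), where λ(t) = Leb({x : f(x) ≥ t}). -/
/-!
For `t > 0` the supremum defining `EM*(t)` is attained at the level set `{t ≤ f}`: on a set of
finite measure, adding points where `f ≥ t` and removing points where `f < t` can only increase
`∫_Ω (f - t)`. Testing the level set `{u ≤ f}` in the supremum at `s` gives the supporting line
`EM*(s) ≥ EM*(u) - (s - u) λ(u)`, so `-λ` is a subgradient of `EM*` at every positive point.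
A function trapped between its supporting lines at `t` and at nearby `s` is differentiable at `t`
as soon as the subgradient is continuous there, and `λ` is continuous at `t` by dominated
convergence because `{f = t}` is null.
-/

open MeasureTheory

noncomputable def excessMass {d : ℕ} (f : (Fin d → ℝ) → ℝ) (t : ℝ)
    (Ω : Set (Fin d → ℝ)) : ℝ :=
  (∫ x in Ω, f x) - t * (volume Ω).toReal

noncomputable def EMstar {d : ℕ} (f : (Fin d → ℝ) → ℝ) (t : ℝ) : ℝ :=
  ⨆ Ω : {Ω : Set (Fin d → ℝ) // MeasurableSet Ω ∧ volume Ω ≠ ⊤},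
    excessMass f t Ω

open Filter Topology Asymptotics

theorem hasDerivAt_of_eventually_subgradient {g g' : ℝ → ℝ} {t : ℝ} (hg' : ContinuousAt g' t)
    (hsub : ∀ᶠ s in 𝓝 t, g t + (s - t) * g' t ≤ g s ∧ g s + (t - s) * g' s ≤ g t) :
    HasDerivAt g (g' t) t := by
  rw [hasDerivAt_iff_isLittleO]
  have hbound : (fun s => g s - g t - (s - t) • g' t) =O[𝓝 t]
      fun s => (s - t) * (g' s - g' t) := by
    refine IsBigO.of_bound' ?_
    filter_upwards [hsub] with s ⟨hts, hst⟩
    rw [smul_eq_mul, Real.norm_eq_abs, Real.norm_eq_abs, abs_of_nonneg (by linarith)]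
    exact (by linarith : _ ≤ (s - t) * (g' s - g' t)).trans (le_abs_self _)
  have hsmall : (fun s => g' s - g' t) =o[𝓝 t] fun _ => (1 : ℝ) :=
    (isLittleO_one_iff ℝ).2 (tendsto_sub_nhds_zero_iff.2 hg')
  simpa using hbound.trans_isLittleO ((isBigO_refl (fun s => s - t) _).mul_isLittleO hsmall)

section LevelSets

variable {α : Type*} [MeasurableSpace α] {μ : Measure α} {f : α → ℝ} {t : ℝ}

theorem continuousAt_measureReal_setOf_le (hf : Measurable f) (hfi : Integrable f μ)
    (ht : 0 < t) (hflat : μ {x | f x = t} = 0) :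
    ContinuousAt (fun s => μ.real {x | s ≤ f x}) t := by
  have hmeas : ∀ s, MeasurableSet {x | s ≤ f x} := fun s => measurableSet_le measurable_const hf
  simp only [ContinuousAt, ← integral_indicator_one (hmeas _)]
  refine tendsto_integral_filter_of_dominated_convergence ({x | t / 2 ≤ f x}.indicator 1)
    (Eventually.of_forall fun s => aestronglyMeasurable_const.indicator (hmeas s)) ?_
    ((integrable_indicator_iff (hmeas _)).2
      (integrableOn_const (hfi.measure_ge_lt_top (half_pos ht)).ne)) ?_
  · filter_upwards [Ioi_mem_nhds (half_lt_self ht)] with s hs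
    refine Eventually.of_forall fun x => ?_
    by_cases hx : s ≤ f x
    · have : t / 2 ≤ f x := (le_of_lt hs).trans hx
      simp [Set.indicator_of_mem, hx, this]
    · simp [Set.indicator_of_notMem, hx, Set.indicator_nonneg]
  · filter_upwards [measure_eq_zero_iff_ae_notMem.1 hflat] with x hx
    refine tendsto_const_nhds.congr' ?_
    rcases lt_or_gt_of_ne (hx : f x ≠ t) with hlt | hgt
    · filter_upwards [Ioi_mem_nhds hlt] with s hs
      simp [Set.indicator_of_notMem, not_le.2 hlt, not_le.2 (show f x < s from hs)]
    · filter_upwards [Iio_mem_nhds hgt] with s hs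
      simp [Set.indicator_of_mem, hgt.le, (show s < f x from hs).le]

theorem setIntegral_sub_le_setIntegral_setOf_le {Ω : Set α} (hf : Measurable f)
    (hfi : Integrable f μ) (ht : 0 < t) (hΩ : MeasurableSet Ω) (hΩμ : μ Ω ≠ ⊤) :
    ∫ x in Ω, (f x - t) ∂μ ≤ ∫ x in {x | t ≤ f x}, (f x - t) ∂μ := by
  have hL : MeasurableSet {x | t ≤ f x} := measurableSet_le measurable_const hf
  rw [← integral_indicator hΩ, ← integral_indicator hL]
  refine integral_mono ((integrable_indicator_iff hΩ).2 (hfi.integrableOn.sub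
    (integrableOn_const hΩμ))) ((integrable_indicator_iff hL).2 (hfi.integrableOn.sub
    (integrableOn_const (hfi.measure_ge_lt_top ht).ne))) fun x => ?_
  by_cases hx : t ≤ f x
  · by_cases hxΩ : x ∈ Ω <;> simp [Set.indicator, hx, hxΩ]
  · have hneg : f x - t ≤ 0 := by linarith [not_le.1 hx]
    by_cases hxΩ : x ∈ Ω <;> simp [Set.indicator, hx, hxΩ, hneg]

end LevelSets

section EMstar

variable {d : ℕ} {f : (Fin d → ℝ) → ℝ} {t : ℝ}

theorem excessMass_eq_setIntegral (hf : Integrable f) {Ω : Set (Fin d → ℝ)} (hΩ : volume Ω ≠ ⊤) :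
    excessMass f t Ω = ∫ x in Ω, (f x - t) := by
  rw [excessMass, integral_sub hf.integrableOn (integrableOn_const hΩ), setIntegral_const,
    smul_eq_mul, mul_comm, measureReal_def]

theorem isGreatest_excessMass_setOf_le (hf : Measurable f) (hfi : Integrable f) (ht : 0 < t) :
    IsGreatest (Set.range fun Ω : {Ω : Set (Fin d → ℝ) // MeasurableSet Ω ∧ volume Ω ≠ ⊤} =>
      excessMass f t Ω) (excessMass f t {x | t ≤ f x}) := by
  have hLμ : volume {x | t ≤ f x} ≠ ⊤ := (hfi.measure_ge_lt_top ht).ne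
  refine ⟨⟨⟨_, measurableSet_le measurable_const hf, hLμ⟩, rfl⟩, ?_⟩
  rintro _ ⟨⟨Ω, hΩ, hΩμ⟩, rfl⟩
  show excessMass f t Ω ≤ _
  rw [excessMass_eq_setIntegral hfi hΩμ, excessMass_eq_setIntegral hfi hLμ]
  exact setIntegral_sub_le_setIntegral_setOf_le hf hfi ht hΩ hΩμ

theorem EMstar_eq_excessMass_setOf_le (hf : Measurable f) (hfi : Integrable f) (ht : 0 < t) :
    EMstar f t = excessMass f t {x | t ≤ f x} :=
  (isGreatest_excessMass_setOf_le hf hfi ht).csSup_eq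

theorem EMstar_add_mul_le (hf : Measurable f) (hfi : Integrable f) {s : ℝ} (hs : 0 < s)
    (ht : 0 < t) : EMstar f t + (s - t) * -(volume {x | t ≤ f x}).toReal ≤ EMstar f s := by
  have hle := (isGreatest_excessMass_setOf_le hf hfi hs).2
    ⟨⟨{x | t ≤ f x}, measurableSet_le measurable_const hf, (hfi.measure_ge_lt_top ht).ne⟩, rfl⟩
  rw [EMstar_eq_excessMass_setOf_le hf hfi hs, EMstar_eq_excessMass_setOf_le hf hfi ht]
  simp only [excessMass] at hle ⊢
  linarith

end EMstar

theorem EMstar_hasDerivAt_general {d : ℕ} (f : (Fin d → ℝ) → ℝ)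
    (hf_meas : Measurable f)
    (hf_int : Integrable f)
    (hA2 : ∀ c : ℝ, 0 ≤ c → volume {x | f x = c} = 0) :
    ∀ t ∈ Set.Ioo 0 (essSup f volume),
      HasDerivAt (EMstar f) (-(volume {x | t ≤ f x}).toReal) t := by
  rintro t ⟨ht, -⟩
  refine hasDerivAt_of_eventually_subgradient (g' := fun s => -(volume {x | s ≤ f x}).toReal)
    (continuousAt_measureReal_setOf_le hf_meas hf_int ht (hA2 t ht.le)).neg ?_
  filter_upwards [Ioi_mem_nhds ht] with s hs
  exact ⟨EMstar_add_mul_le hf_meas hf_int hs ht, EMstar_add_mul_le hf_meas hf_int ht hs⟩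

theorem EMstar_hasDerivAt {d : ℕ} (f : (Fin d → ℝ) → ℝ)
    (hf_meas : Measurable f) (hf_nonneg : ∀ x, 0 ≤ f x)
    (hf_int : Integrable f) (hf_prob : (∫ x, f x) = 1)
    (C : ℝ) (hf_bdd : ∀ x, f x ≤ C)
    (hA2 : ∀ c : ℝ, 0 ≤ c → volume {x | f x = c} = 0) :
    ∀ t ∈ Set.Ioo 0 (essSup f volume),
      HasDerivAt (EMstar f) (-(volume {x | t ≤ f x}).toReal) t :=
  EMstar_hasDerivAt_general f hf_meas hf_int hA2
end

section
/- Let μ be a finite measure (e.g. an empirical measure), let t_K < t_{K−1} < ... < t_1 be positive reals, let G be a class of Borel sets closed under finite unions and intersections, and for each k let Ω̂_k ∈ G maximize μ(Ω) − t_k·Leb(Ω) over Ω ∈ G. Then for each k, the sets ∪_{i ≤ k} Ω̂_i and ∩_{i ≥ k} Ω̂_i are also maximizers of Ω ↦ μ(Ω) − t_k·Leb(Ω) over G. -/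
/-!
The excess mass `H_t(Ω) = μ(Ω) - t·Leb(Ω)` is modular, `H_t(A ∪ B) + H_t(A ∩ B) = H_t(A) + H_t(B)`,
and for `A ⊆ B` the increment `H_t(B) - H_t(A)` is antitone in `t`. Hence if `A` maximizes `H_s`
and `B` maximizes `H_u` with `s ≤ u`, then
`H_s(A ∪ B) - H_s(A) = H_s(B) - H_s(A ∩ B) ≥ H_u(B) - H_u(A ∩ B) ≥ 0`, so `A ∪ B` maximizes `H_s`;
dually `A ∩ B` maximizes `H_s` when `u ≤ s`. Adjoining the `Ω̂_i`, `i ≤ k` (resp. `i ≥ k`),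
one at a time to `Ω̂_k` gives the theorem.
-/

open MeasureTheory

/-- Empirical excess-mass functional: `H_{μ,t}(Ω) = μ(Ω) - t·Leb(Ω)`. -/
noncomputable def empExcessMass {d : ℕ} (μ : Measure (Fin d → ℝ)) (t : ℝ)
    (Ω : Set (Fin d → ℝ)) : ℝ :=
  (μ Ω).toReal - t * (volume Ω).toReal

theorem Finset.sup_sup_induction {α ι : Type*} [SemilatticeSup α] [OrderBot α]
    {P : α → Prop} {a : α} (ha : P a) (s : Finset ι) (f : ι → α)
    (hf : ∀ i ∈ s, ∀ x, P x → P (x ⊔ f i)) : P (a ⊔ s.sup f) := by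
  classical
  induction s using Finset.induction_on with
  | empty => simpa using ha
  | insert j s _ ih =>
    rw [Finset.sup_insert, sup_left_comm, sup_comm]
    exact hf j (mem_insert_self j s) _ (ih fun i hi => hf i (mem_insert_of_mem hi))

theorem Finset.inf_inf_induction {α ι : Type*} [SemilatticeInf α] [OrderTop α]
    {P : α → Prop} {a : α} (ha : P a) (s : Finset ι) (f : ι → α)
    (hf : ∀ i ∈ s, ∀ x, P x → P (x ⊓ f i)) : P (a ⊓ s.inf f) :=
  Finset.sup_sup_induction (α := αᵒᵈ) ha s f hf

section ExcessMass

variable {d : ℕ} {μ : Measure (Fin d → ℝ)}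

theorem empExcessMass_sub_antitone {A B : Set (Fin d → ℝ)} (hAB : A ⊆ B)
    (hB_fin : volume B ≠ ⊤) {s u : ℝ} (hsu : s ≤ u) :
    empExcessMass μ u B - empExcessMass μ u A ≤ empExcessMass μ s B - empExcessMass μ s A := by
  have hLeb : volume.real A ≤ volume.real B := measureReal_mono hAB hB_fin
  have hgap := mul_le_mul_of_nonneg_left hLeb (sub_nonneg.2 hsu)
  simp only [empExcessMass, ← measureReal_def]
  linarith

variable [IsFiniteMeasure μ]

theorem empExcessMass_union_add_inter {A B : Set (Fin d → ℝ)} (hB : MeasurableSet B)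
    (hA_fin : volume A ≠ ⊤) (hB_fin : volume B ≠ ⊤) (t : ℝ) :
    empExcessMass μ t (A ∪ B) + empExcessMass μ t (A ∩ B) =
      empExcessMass μ t A + empExcessMass μ t B := by
  have hμ : μ.real (A ∪ B) + μ.real (A ∩ B) = μ.real A + μ.real B :=
    measureReal_union_add_inter hB
  have hLeb : volume.real (A ∪ B) + volume.real (A ∩ B) = volume.real A + volume.real B :=
    measureReal_union_add_inter hB hA_fin hB_fin
  simp only [empExcessMass, ← measureReal_def]
  linear_combination hμ - t * hLeb

variable {G : Set (Set (Fin d → ℝ))} (hG_meas : ∀ Ω ∈ G, MeasurableSet Ω)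
  (hG_fin : ∀ Ω ∈ G, volume Ω ≠ ⊤)
include hG_meas hG_fin

theorem IsMaxOn.empExcessMass_union (hG_inter : ∀ A ∈ G, ∀ B ∈ G, A ∩ B ∈ G)
    {s u : ℝ} (hsu : s ≤ u) {A B : Set (Fin d → ℝ)} (hA : A ∈ G) (hB : B ∈ G)
    (hA_max : IsMaxOn (empExcessMass μ s) G A) (hB_max : IsMaxOn (empExcessMass μ u) G B) :
    IsMaxOn (empExcessMass μ s) G (A ∪ B) := by
  refine isMaxOn_iff.2 fun Ω hΩ => ?_
  have hmod :=
    empExcessMass_union_add_inter (μ := μ) (hG_meas B hB) (hG_fin A hA) (hG_fin B hB) s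
  have hgain : empExcessMass μ u (A ∩ B) ≤ empExcessMass μ u B := hB_max (hG_inter A hA B hB)
  have hshift :=
    empExcessMass_sub_antitone (μ := μ) (Set.inter_subset_right (s := A)) (hG_fin B hB) hsu
  have hΩ_le : empExcessMass μ s Ω ≤ empExcessMass μ s A := hA_max hΩ
  linarith

theorem IsMaxOn.empExcessMass_inter (hG_union : ∀ A ∈ G, ∀ B ∈ G, A ∪ B ∈ G)
    {s u : ℝ} (hus : u ≤ s) {A B : Set (Fin d → ℝ)} (hA : A ∈ G) (hB : B ∈ G)
    (hA_max : IsMaxOn (empExcessMass μ s) G A) (hB_max : IsMaxOn (empExcessMass μ u) G B) :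
    IsMaxOn (empExcessMass μ s) G (A ∩ B) := by
  refine isMaxOn_iff.2 fun Ω hΩ => ?_
  have hmod :=
    empExcessMass_union_add_inter (μ := μ) (hG_meas B hB) (hG_fin A hA) (hG_fin B hB) s
  have hgain : empExcessMass μ u (A ∪ B) ≤ empExcessMass μ u B := hB_max (hG_union A hA B hB)
  have hshift := empExcessMass_sub_antitone (μ := μ) (Set.subset_union_right (s := A))
    (measure_union_ne_top (hG_fin A hA) (hG_fin B hB)) hus
  have hΩ_le : empExcessMass μ s Ω ≤ empExcessMass μ s A := hA_max hΩ
  linarith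

end ExcessMass

theorem empirical_clusters_monotone_general {d K : ℕ} (μ : Measure (Fin d → ℝ))
    [IsFiniteMeasure μ]
    (G : Set (Set (Fin d → ℝ)))
    (hG_meas : ∀ Ω ∈ G, MeasurableSet Ω)
    (hG_fin : ∀ Ω ∈ G, volume Ω ≠ ⊤)
    (hG_union : ∀ A ∈ G, ∀ B ∈ G, A ∪ B ∈ G)
    (hG_inter : ∀ A ∈ G, ∀ B ∈ G, A ∩ B ∈ G)
    (t : Fin K → ℝ) (ht_anti : StrictAnti t)
    (Ωh : Fin K → Set (Fin d → ℝ))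
    (hΩ_mem : ∀ k, Ωh k ∈ G)
    (hΩ_max : ∀ k, ∀ Ω ∈ G, empExcessMass μ (t k) Ω ≤ empExcessMass μ (t k) (Ωh k)) :
    ∀ k : Fin K,
      ((⋃ i ∈ {i : Fin K | i ≤ k}, Ωh i) ∈ G ∧
        ∀ Ω ∈ G, empExcessMass μ (t k) Ω ≤
          empExcessMass μ (t k) (⋃ i ∈ {i : Fin K | i ≤ k}, Ωh i)) ∧
      ((⋂ i ∈ {i : Fin K | k ≤ i}, Ωh i) ∈ G ∧
        ∀ Ω ∈ G, empExcessMass μ (t k) Ω ≤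
          empExcessMass μ (t k) (⋂ i ∈ {i : Fin K | k ≤ i}, Ωh i)) := by
  intro k
  simp only [← isMaxOn_iff] at hΩ_max ⊢
  have hUnion : ⋃ i ∈ {i : Fin K | i ≤ k}, Ωh i = Ωh k ⊔ (Finset.Iic k).sup Ωh := by
    rw [Finset.sup_set_eq_biUnion]
    simp only [Finset.mem_Iic, Set.mem_ofPred_eq]
    exact (sup_eq_right.2 (Set.subset_iUnion₂ (s := fun i (_ : i ≤ k) => Ωh i) k le_rfl)).symm
  have hInter : ⋂ i ∈ {i : Fin K | k ≤ i}, Ωh i = Ωh k ⊓ (Finset.Ici k).inf Ωh := by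
    rw [Finset.inf_set_eq_iInter]
    simp only [Finset.mem_Ici, Set.mem_ofPred_eq]
    exact (inf_eq_right.2 (Set.iInter₂_subset (s := fun i (_ : k ≤ i) => Ωh i) k le_rfl)).symm
  let IsMaximizer (X : Set (Fin d → ℝ)) : Prop := X ∈ G ∧ IsMaxOn (empExcessMass μ (t k)) G X
  have hk : IsMaximizer (Ωh k) := ⟨hΩ_mem k, hΩ_max k⟩
  rw [hUnion, hInter]
  refine ⟨Finset.sup_sup_induction (P := IsMaximizer) hk _ _ ?_,
    Finset.inf_inf_induction (P := IsMaximizer) hk _ _ ?_⟩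
  · rintro i hi X ⟨hX, hX_max⟩
    exact ⟨hG_union X hX _ (hΩ_mem i), hX_max.empExcessMass_union hG_meas hG_fin hG_inter
      (ht_anti.antitone (Finset.mem_Iic.1 hi)) hX (hΩ_mem i) (hΩ_max i)⟩
  · rintro i hi X ⟨hX, hX_max⟩
    exact ⟨hG_inter X hX _ (hΩ_mem i), hX_max.empExcessMass_inter hG_meas hG_fin hG_union
      (ht_anti.antitone (Finset.mem_Ici.1 hi)) hX (hΩ_mem i) (hΩ_max i)⟩

theorem empirical_clusters_monotone {d K : ℕ} (μ : Measure (Fin d → ℝ))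
    [IsFiniteMeasure μ]
    (G : Set (Set (Fin d → ℝ)))
    (hG_meas : ∀ Ω ∈ G, MeasurableSet Ω)
    (hG_fin : ∀ Ω ∈ G, volume Ω ≠ ⊤)
    (hG_union : ∀ A ∈ G, ∀ B ∈ G, A ∪ B ∈ G)
    (hG_inter : ∀ A ∈ G, ∀ B ∈ G, A ∩ B ∈ G)
    (t : Fin K → ℝ) (ht_pos : ∀ k, 0 < t k) (ht_anti : StrictAnti t)
    (Ωh : Fin K → Set (Fin d → ℝ))
    (hΩ_mem : ∀ k, Ωh k ∈ G)
    (hΩ_max : ∀ k, ∀ Ω ∈ G, empExcessMass μ (t k) Ω ≤ empExcessMass μ (t k) (Ωh k)) :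
    ∀ k : Fin K,
      ((⋃ i ∈ {i : Fin K | i ≤ k}, Ωh i) ∈ G ∧
        ∀ Ω ∈ G, empExcessMass μ (t k) Ω ≤
          empExcessMass μ (t k) (⋃ i ∈ {i : Fin K | i ≤ k}, Ωh i)) ∧
      ((⋂ i ∈ {i : Fin K | k ≤ i}, Ωh i) ∈ G ∧
        ∀ Ω ∈ G, empExcessMass μ (t k) Ω ≤
          empExcessMass μ (t k) (⋂ i ∈ {i : Fin K | k ≤ i}, Ωh i)) :=
  empirical_clusters_monotone_general μ G hG_meas hG_fin hG_union hG_inter t ht_anti Ωh hΩ_mem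
    hΩ_max
end

section
/- The key inequality behind the monotonicity of empirical clusters: if t' ≤ t, A maximizes μ(Ω) − t·Leb(Ω) and B maximizes μ(Ω) − t'·Leb(Ω) over a class G closed under unions and intersections, then A ∪ B is a maximizer for parameter t' and A ∩ B is a maximizer for parameter t. -/
/-!
The excess mass `Ω ↦ μ Ω - s · Leb Ω` is modular on `G`, and the functionals for `t'` and `t`
differ by `(t - t') · Leb`, which is monotone. If `A` maximizes a supermodular `f` and `B`
maximizes `f'` with `f' - f` monotone, then `f (A ∪ B) - f B ≥ f A - f (A ∩ B) ≥ 0`, and adding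
the monotone difference gives `f' (A ∪ B) ≥ f' B`; symmetrically `f (A ∩ B) ≥ f A`.
-/

open MeasureTheory

def SupermodularOn {α : Type*} [Lattice α] (f : α → ℝ) (S : Set α) : Prop :=
  ∀ a ∈ S, ∀ b ∈ S, f a + f b ≤ f (a ⊔ b) + f (a ⊓ b)

section LatticeMaximizers

variable {α : Type*} [Lattice α] {S : Set α} {f f' : α → ℝ} {a b : α}

theorem isMaxOn_sup_of_supermodularOn (hf : SupermodularOn f S)
    (hmono : MonotoneOn (f' - f) S) (ha : a ∈ S) (hb : b ∈ S) (hsup : a ⊔ b ∈ S)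
    (hinf : a ⊓ b ∈ S) (ha_max : IsMaxOn f S a) (hb_max : IsMaxOn f' S b) :
    IsMaxOn f' S (a ⊔ b) := by
  have hinf_le : f (a ⊓ b) ≤ f a := ha_max hinf
  have hdiff : (f' - f) b ≤ (f' - f) (a ⊔ b) := hmono hb hsup le_sup_right
  have hsuper := hf a ha b hb
  have hb_le : f' b ≤ f' (a ⊔ b) := by
    simp only [Pi.sub_apply] at hdiff
    linarith
  exact fun x hx => (hb_max hx).trans hb_le

theorem isMaxOn_inf_of_supermodularOn (hf' : SupermodularOn f' S)
    (hmono : MonotoneOn (f' - f) S) (ha : a ∈ S) (hb : b ∈ S) (hsup : a ⊔ b ∈ S)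
    (hinf : a ⊓ b ∈ S) (ha_max : IsMaxOn f S a) (hb_max : IsMaxOn f' S b) :
    IsMaxOn f S (a ⊓ b) := by
  have hsup_le : f' (a ⊔ b) ≤ f' b := hb_max hsup
  have hdiff : (f' - f) (a ⊓ b) ≤ (f' - f) a := hmono hinf ha inf_le_left
  have hsuper := hf' a ha b hb
  have ha_le : f a ≤ f (a ⊓ b) := by
    simp only [Pi.sub_apply] at hdiff
    linarith
  exact fun x hx => (ha_max hx).trans ha_le

end LatticeMaximizers

section ExcessMass

variable {d : ℕ} (μ : Measure (Fin d → ℝ)) {G : Set (Set (Fin d → ℝ))}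

theorem supermodularOn_empExcessMass [IsFiniteMeasure μ] (hG_meas : ∀ Ω ∈ G, MeasurableSet Ω)
    (hG_fin : ∀ Ω ∈ G, volume Ω ≠ ⊤) (t : ℝ) : SupermodularOn (empExcessMass μ t) G := by
  intro A hA B hB
  have hμ := measureReal_union_add_inter (μ := μ) (s := A) (hG_meas B hB)
  have hvol := measureReal_union_add_inter (μ := volume) (s := A) (hG_meas B hB)
    (hG_fin A hA) (hG_fin B hB)
  simp only [empExcessMass, Set.sup_eq_union, Set.inf_eq_inter, ← measureReal_def]
  linear_combination t * hvol - hμ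

theorem monotoneOn_empExcessMass_sub (hG_fin : ∀ Ω ∈ G, volume Ω ≠ ⊤) {t t' : ℝ}
    (htt' : t' ≤ t) : MonotoneOn (empExcessMass μ t' - empExcessMass μ t) G := by
  intro A _ B hB hAB
  have hvol : volume.real A ≤ volume.real B := measureReal_mono hAB (hG_fin B hB)
  have hscaled := mul_le_mul_of_nonneg_left hvol (sub_nonneg.2 htt')
  simp only [Pi.sub_apply, empExcessMass, ← measureReal_def]
  linarith

end ExcessMass

theorem union_inter_maximizers_general {d : ℕ} (μ : Measure (Fin d → ℝ))
    [IsFiniteMeasure μ]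
    (G : Set (Set (Fin d → ℝ)))
    (hG_meas : ∀ Ω ∈ G, MeasurableSet Ω)
    (hG_fin : ∀ Ω ∈ G, volume Ω ≠ ⊤)
    (hG_union : ∀ A ∈ G, ∀ B ∈ G, A ∪ B ∈ G)
    (hG_inter : ∀ A ∈ G, ∀ B ∈ G, A ∩ B ∈ G)
    (t t' : ℝ) (htt' : t' ≤ t)
    (A B : Set (Fin d → ℝ)) (hA : A ∈ G) (hB : B ∈ G)
    (hA_max : ∀ Ω ∈ G, empExcessMass μ t Ω ≤ empExcessMass μ t A)
    (hB_max : ∀ Ω ∈ G, empExcessMass μ t' Ω ≤ empExcessMass μ t' B) :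
    (∀ Ω ∈ G, empExcessMass μ t' Ω ≤ empExcessMass μ t' (A ∪ B)) ∧
    (∀ Ω ∈ G, empExcessMass μ t Ω ≤ empExcessMass μ t (A ∩ B)) := by
  have hmono := monotoneOn_empExcessMass_sub μ hG_fin htt'
  have hU := hG_union A hA B hB
  have hI := hG_inter A hA B hB
  exact ⟨isMaxOn_sup_of_supermodularOn (supermodularOn_empExcessMass μ hG_meas hG_fin t)
      hmono hA hB hU hI hA_max hB_max,
    isMaxOn_inf_of_supermodularOn (supermodularOn_empExcessMass μ hG_meas hG_fin t')
      hmono hA hB hU hI hA_max hB_max⟩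

theorem union_inter_maximizers {d : ℕ} (μ : Measure (Fin d → ℝ))
    [IsFiniteMeasure μ]
    (G : Set (Set (Fin d → ℝ)))
    (hG_meas : ∀ Ω ∈ G, MeasurableSet Ω)
    (hG_fin : ∀ Ω ∈ G, volume Ω ≠ ⊤)
    (hG_union : ∀ A ∈ G, ∀ B ∈ G, A ∪ B ∈ G)
    (hG_inter : ∀ A ∈ G, ∀ B ∈ G, A ∩ B ∈ G)
    (t t' : ℝ) (ht' : 0 < t') (htt' : t' ≤ t)
    (A B : Set (Fin d → ℝ)) (hA : A ∈ G) (hB : B ∈ G)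
    (hA_max : ∀ Ω ∈ G, empExcessMass μ t Ω ≤ empExcessMass μ t A)
    (hB_max : ∀ Ω ∈ G, empExcessMass μ t' Ω ≤ empExcessMass μ t' B) :
    (∀ Ω ∈ G, empExcessMass μ t' Ω ≤ empExcessMass μ t' (A ∪ B)) ∧
    (∀ Ω ∈ G, empExcessMass μ t Ω ≤ empExcessMass μ t (A ∩ B)) :=
  union_inter_maximizers_general μ G hG_meas hG_fin hG_union hG_inter t t' htt' A B hA hB hA_max
    hB_max
end

section
/- Bias control for piecewise-constant models: let F = {F_i}_{i≥1} be a countable measurable partition of ℝ^d with each Leb(F_i) ∈ (0, ∞), let f_F be the conditional expectation of f on the partition, f_F(x) = Σ_i 1_{x ∈ F_i} (1/Leb(F_i)) ∫_{F_i} f, and let EM*_σ(F)(t) be the supremum of P(X ∈ Ω) − t·Leb(Ω) over Ω in the σ-algebra generated by F. Then for every t ∈ [0, ‖f‖∞], 0 ≤ EM*(t) − EM*_σ(F)(t) ≤ ‖f − f_F‖_{L¹}. -/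
/-!
Replacing `f` by its cell averages `f_F` moves the excess mass of any set by at most
`‖f - f_F‖₁`. For the piecewise-constant `f_F`, the excess mass of `Ω` splits over the
cells as `∑ᵢ (cᵢ - t) Leb(Ω ∩ Fᵢ)`, where `cᵢ` is the average of `f` on `Fᵢ`; each term
is at most the positive part of `(cᵢ - t) Leb(Fᵢ)`, the excess mass of `f` on the whole
cell. Every finite sum of these positive parts is the excess mass of `f` on a finite
union of cells, a set of `σ(F)`; finite unions are needed because the union of all
cells with `cᵢ ≥ t` may have infinite measure (e.g. for `t = 0`).
-/

open MeasureTheory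

/-- Supremum of the excess-mass functional restricted to a class `C` of sets. -/
noncomputable def EMclass {d : ℕ} (f : (Fin d → ℝ) → ℝ)
    (C : Set (Set (Fin d → ℝ))) (t : ℝ) : ℝ :=
  ⨆ Ω : {Ω : Set (Fin d → ℝ) // Ω ∈ C ∧ volume Ω ≠ ⊤}, excessMass f t Ω

/-- Best piecewise-constant approximation of `f` on the partition `F`. -/
noncomputable def partApprox {d : ℕ} (f : (Fin d → ℝ) → ℝ)
    (F : ℕ → Set (Fin d → ℝ)) (x : Fin d → ℝ) : ℝ :=
  ∑' i, Set.indicator (F i)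
    (fun _ => (∫ y in F i, f y) / (volume (F i)).toReal) x

open Set Function

section ExcessMass

variable {d : ℕ} {f g : (Fin d → ℝ) → ℝ} {t : ℝ}

lemma excessMass_empty : excessMass f t ∅ = 0 := by
  simp [excessMass]

lemma excessMass_le_integral_abs (hf : Integrable f) (ht : 0 ≤ t) (Ω : Set (Fin d → ℝ)) :
    excessMass f t Ω ≤ ∫ x, |f x| :=
  calc excessMass f t Ω ≤ ∫ x in Ω, |f x| := by
        have : ∫ x in Ω, f x ≤ ∫ x in Ω, |f x| :=
          integral_mono hf.integrableOn hf.abs.integrableOn fun x => le_abs_self (f x)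
        have : 0 ≤ t * (volume Ω).toReal := by positivity
        unfold excessMass
        linarith
    _ ≤ ∫ x, |f x| := setIntegral_le_integral hf.abs (ae_of_all _ fun x => abs_nonneg _)

lemma excessMass_le_add_integral_abs_sub (hf : Integrable f) (hg : Integrable g)
    (Ω : Set (Fin d → ℝ)) : excessMass f t Ω ≤ excessMass g t Ω + ∫ x, |f x - g x| := by
  have hsplit : ∫ x in Ω, f x = (∫ x in Ω, f x - g x) + ∫ x in Ω, g x := by
    rw [integral_sub hf.integrableOn hg.integrableOn]
    ring
  have hdiff := excessMass_le_integral_abs (hf.sub hg) le_rfl Ω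
  simp only [excessMass, zero_mul, sub_zero, Pi.sub_apply] at hdiff ⊢
  linarith

lemma excessMass_biUnion_finset {ι : Type*} (s : Finset ι) {F : ι → Set (Fin d → ℝ)}
    (hF_meas : ∀ i ∈ s, MeasurableSet (F i)) (hF_disj : (s : Set ι).PairwiseDisjoint F)
    (hF_fin : ∀ i ∈ s, volume (F i) ≠ ⊤) (hf : Integrable f) :
    excessMass f t (⋃ i ∈ s, F i) = ∑ i ∈ s, excessMass f t (F i) := by
  simp only [excessMass, Finset.sum_sub_distrib, ← Finset.mul_sum]
  rw [integral_biUnion_finset s hF_meas hF_disj fun i _ => hf.integrableOn,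
    measure_biUnion_finset hF_disj hF_meas, ENNReal.toReal_sum hF_fin]

lemma hasSum_excessMass_iUnion {ι : Type*} [Countable ι] {F : ι → Set (Fin d → ℝ)}
    (hF_meas : ∀ i, MeasurableSet (F i)) (hF_disj : Pairwise (Disjoint on F))
    (hf : IntegrableOn f (⋃ i, F i)) (hfin : volume (⋃ i, F i) ≠ ⊤) :
    HasSum (fun i => excessMass f t (F i)) (excessMass f t (⋃ i, F i)) := by
  refine (hasSum_integral_iUnion hF_meas hF_disj hf).sub (HasSum.mul_left t ?_)
  rw [measure_iUnion hF_disj hF_meas] at hfin ⊢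
  rw [ENNReal.tsum_toReal_eq fun i => ne_top_of_le_ne_top hfin (ENNReal.le_tsum i)]
  exact ENNReal.hasSum_toReal hfin

end ExcessMass

section Supremum

variable {d : ℕ} {f : (Fin d → ℝ) → ℝ} {t : ℝ} {C : Set (Set (Fin d → ℝ))}

lemma EMstar_eq_EMclass : EMstar f t = EMclass f {Ω | MeasurableSet Ω} t := rfl

lemma excessMass_le_EMclass (hf : Integrable f) (ht : 0 ≤ t) {Ω : Set (Fin d → ℝ)}
    (hΩ : Ω ∈ C) (hΩ_fin : volume Ω ≠ ⊤) : excessMass f t Ω ≤ EMclass f C t :=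
  le_ciSup (f := fun Ω : {Ω // Ω ∈ C ∧ volume Ω ≠ ⊤} => excessMass f t Ω)
    ⟨_, forall_mem_range.2 fun Ω => excessMass_le_integral_abs hf ht Ω.1⟩
    ⟨Ω, hΩ, hΩ_fin⟩

lemma EMclass_nonneg (hf : Integrable f) (ht : 0 ≤ t) (hC : ∅ ∈ C) : 0 ≤ EMclass f C t :=
  excessMass_empty (f := f) (t := t) ▸ excessMass_le_EMclass hf ht hC (by simp)

lemma EMclass_le {a : ℝ} (h : ∀ Ω ∈ C, volume Ω ≠ ⊤ → excessMass f t Ω ≤ a)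
    (ha : 0 ≤ a) : EMclass f C t ≤ a :=
  Real.iSup_le (fun Ω => h Ω.1 Ω.2.1 Ω.2.2) ha

lemma EMclass_le_EMstar (hf : Integrable f) (ht : 0 ≤ t) (hC : ∀ Ω ∈ C, MeasurableSet Ω) :
    EMclass f C t ≤ EMstar f t := by
  rw [EMstar_eq_EMclass]
  exact EMclass_le (fun Ω hΩ hΩ_fin => excessMass_le_EMclass hf ht (hC Ω hΩ) hΩ_fin)
    (EMclass_nonneg hf ht (mem_ofPred.2 MeasurableSet.empty))

end Supremum

lemma measurable_of_eq_on_cells {α β ι : Type*} [MeasurableSpace α] [MeasurableSpace β]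
    [Countable ι] {F : ι → Set α} (hF_meas : ∀ i, MeasurableSet (F i))
    (hF_cover : ⋃ i, F i = univ) {g : α → β} {c : ι → β}
    (hg : ∀ i, ∀ x ∈ F i, g x = c i) : Measurable g := by
  intro s _
  have : g ⁻¹' s = ⋃ i, F i ∩ {_x | c i ∈ s} := by
    ext x
    obtain ⟨i, hi⟩ := mem_iUnion.1 (hF_cover ▸ mem_univ x)
    simp only [mem_preimage, mem_iUnion, mem_inter_iff, mem_ofPred_eq]
    exact ⟨fun hx => ⟨i, hi, hg i x hi ▸ hx⟩, fun ⟨j, hj, hs⟩ => hg j x hj ▸ hs⟩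
  rw [this]
  exact .iUnion fun i => (hF_meas i).inter (.const _)

section Partition

variable {d : ℕ} {f : (Fin d → ℝ) → ℝ} {F : ℕ → Set (Fin d → ℝ)}

lemma partApprox_eq_of_mem (hF_disj : Pairwise (Disjoint on F)) {i : ℕ} {x : Fin d → ℝ}
    (hx : x ∈ F i) : partApprox f F x = ⨍ y in F i, f y := by
  rw [partApprox, tsum_eq_single i fun j hj =>
      indicator_of_notMem (fun hxj => (hF_disj hj).notMem_of_mem_left hxj hx) _,
    indicator_of_mem hx, setAverage_eq, smul_eq_mul, measureReal_def, div_eq_inv_mul]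

lemma measurable_partApprox (hF_meas : ∀ i, MeasurableSet (F i))
    (hF_disj : Pairwise (Disjoint on F)) (hF_cover : ⋃ i, F i = univ) :
    Measurable (partApprox f F) :=
  measurable_of_eq_on_cells hF_meas hF_cover fun _ _ => partApprox_eq_of_mem hF_disj

lemma setLIntegral_enorm_partApprox_le (hF_meas : ∀ i, MeasurableSet (F i))
    (hF_disj : Pairwise (Disjoint on F)) {i : ℕ} (hF_fin : volume (F i) ≠ ⊤) :
    ∫⁻ x in F i, ‖partApprox f F x‖ₑ ≤ ∫⁻ x in F i, ‖f x‖ₑ :=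
  calc ∫⁻ x in F i, ‖partApprox f F x‖ₑ
      = ‖(volume (F i)).toReal • ⨍ y in F i, f y‖ₑ := by
        rw [setLIntegral_congr_fun (hF_meas i)
            fun x hx => by rw [partApprox_eq_of_mem hF_disj hx],
          setLIntegral_const, enorm_smul, Real.enorm_of_nonneg ENNReal.toReal_nonneg,
          ENNReal.ofReal_toReal hF_fin, mul_comm]
    _ = ‖∫ x in F i, f x‖ₑ := by rw [← measureReal_def, measure_smul_setAverage _ hF_fin]
    _ ≤ ∫⁻ x in F i, ‖f x‖ₑ := enorm_integral_le_lintegral_enorm _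

lemma integrable_partApprox (hf : Integrable f) (hF_meas : ∀ i, MeasurableSet (F i))
    (hF_disj : Pairwise (Disjoint on F)) (hF_cover : ⋃ i, F i = univ)
    (hF_fin : ∀ i, volume (F i) ≠ ⊤) : Integrable (partApprox f F) := by
  refine ⟨(measurable_partApprox hF_meas hF_disj hF_cover).aestronglyMeasurable, ?_⟩
  have hcells (h : (Fin d → ℝ) → ℝ) :
      ∫⁻ x, ‖h x‖ₑ = ∑' i, ∫⁻ x in F i, ‖h x‖ₑ := by
    rw [← lintegral_iUnion hF_meas hF_disj, hF_cover, Measure.restrict_univ]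
  calc ∫⁻ x, ‖partApprox f F x‖ₑ
      ≤ ∫⁻ x, ‖f x‖ₑ := by
        rw [hcells, hcells]
        exact ENNReal.tsum_le_tsum fun i =>
          setLIntegral_enorm_partApprox_le hF_meas hF_disj (hF_fin i)
    _ < ⊤ := hf.2

lemma excessMass_partApprox_inter_le (hF_meas : ∀ i, MeasurableSet (F i))
    (hF_disj : Pairwise (Disjoint on F)) {i : ℕ} (hF_fin : volume (F i) ≠ ⊤) {t : ℝ}
    {Ω : Set (Fin d → ℝ)} (hΩ : MeasurableSet Ω) :
    excessMass (partApprox f F) t (Ω ∩ F i) ≤ max 0 (excessMass f t (F i)) := by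
  set c := ⨍ y in F i, f y
  have hpiece : excessMass (partApprox f F) t (Ω ∩ F i) =
      (c - t) * (volume (Ω ∩ F i)).toReal := by
    rw [excessMass, setIntegral_congr_fun (hΩ.inter (hF_meas i))
        fun x hx => partApprox_eq_of_mem hF_disj hx.2,
      setIntegral_const, smul_eq_mul, measureReal_def]
    ring
  have hcell : excessMass f t (F i) = (c - t) * (volume (F i)).toReal := by
    rw [excessMass, ← measure_smul_setAverage _ hF_fin, smul_eq_mul, measureReal_def]
    ring
  have hvol : (volume (Ω ∩ F i)).toReal ≤ (volume (F i)).toReal :=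
    ENNReal.toReal_mono hF_fin (measure_mono inter_subset_right)
  rw [hpiece, hcell]
  rcases le_total t c with htc | hct
  · exact le_max_of_le_right (mul_le_mul_of_nonneg_left hvol (sub_nonneg.2 htc))
  · exact le_max_of_le_left
      (mul_nonpos_of_nonpos_of_nonneg (sub_nonpos.2 hct) ENNReal.toReal_nonneg)

lemma excessMass_partApprox_le_EMclass (hf : Integrable f) {t : ℝ} (ht : 0 ≤ t)
    (hF_meas : ∀ i, MeasurableSet (F i)) (hF_disj : Pairwise (Disjoint on F))
    (hF_cover : ⋃ i, F i = univ) (hF_fin : ∀ i, volume (F i) ≠ ⊤) {Ω : Set (Fin d → ℝ)}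
    (hΩ : MeasurableSet Ω) (hΩ_fin : volume Ω ≠ ⊤) :
    excessMass (partApprox f F) t Ω ≤
      EMclass f {Ω | MeasurableSet[MeasurableSpace.generateFrom (range F)] Ω} t := by
  have hsum : HasSum (fun i => excessMass (partApprox f F) t (Ω ∩ F i))
      (excessMass (partApprox f F) t Ω) := by
    have hΩ_eq : ⋃ i, Ω ∩ F i = Ω := by rw [← inter_iUnion, hF_cover, inter_univ]
    convert hasSum_excessMass_iUnion (fun i => hΩ.inter (hF_meas i))
      (fun i j hij => (hF_disj hij).mono inter_subset_right inter_subset_right)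
      (integrable_partApprox hf hF_meas hF_disj hF_cover hF_fin).integrableOn
      (by rwa [hΩ_eq]) using 2
    exact hΩ_eq.symm
  refine hasSum_le_of_sum_le hsum fun s => ?_
  set s' := s.filter fun i => 0 ≤ excessMass f t (F i)
  calc ∑ i ∈ s, excessMass (partApprox f F) t (Ω ∩ F i)
      ≤ ∑ i ∈ s, max 0 (excessMass f t (F i)) :=
        Finset.sum_le_sum fun i _ => excessMass_partApprox_inter_le hF_meas hF_disj (hF_fin i) hΩ
    _ = ∑ i ∈ s', excessMass f t (F i) := by
        rw [Finset.sum_filter]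
        refine Finset.sum_congr rfl fun i _ => ?_
        split_ifs with h
        exacts [max_eq_right h, max_eq_left (le_of_not_ge h)]
    _ = excessMass f t (⋃ i ∈ s', F i) :=
        (excessMass_biUnion_finset s' (fun i _ => hF_meas i) (hF_disj.set_pairwise _)
          (fun i _ => hF_fin i) hf).symm
    _ ≤ _ := by
        refine excessMass_le_EMclass hf ht ?_ ?_
        · exact .biUnion s'.countable_toSet
            fun i _ => MeasurableSpace.measurableSet_generateFrom (mem_range_self i)
        · exact (measure_biUnion_finset_le s' F).trans_lt
            (ENNReal.sum_lt_top.2 fun i _ => (hF_fin i).lt_top) |>.ne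

end Partition

theorem bias_control_general {d : ℕ} (f : (Fin d → ℝ) → ℝ)
    (hf_int : Integrable f)
    (F : ℕ → Set (Fin d → ℝ))
    (hF_meas : ∀ i, MeasurableSet (F i))
    (hF_disj : Pairwise (Function.onFun Disjoint F))
    (hF_cover : (⋃ i, F i) = Set.univ)
    (hF_fin : ∀ i, volume (F i) ≠ ⊤) :
    ∀ t ∈ Set.Icc (0 : ℝ) (essSup f volume),
      0 ≤ EMstar f t -
          EMclass f {Ω | MeasurableSet[MeasurableSpace.generateFrom (Set.range F)] Ω} t ∧
      EMstar f t -
          EMclass f {Ω | MeasurableSet[MeasurableSpace.generateFrom (Set.range F)] Ω} t ≤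
        ∫ x, |f x - partApprox f F x| := by
  rintro t ⟨ht, -⟩
  have hσ_le :
      ∀ Ω, MeasurableSet[MeasurableSpace.generateFrom (range F)] Ω → MeasurableSet Ω :=
    MeasurableSpace.generateFrom_le (forall_mem_range.2 hF_meas)
  refine ⟨sub_nonneg.2 (EMclass_le_EMstar hf_int ht hσ_le), sub_le_iff_le_add'.2 ?_⟩
  rw [EMstar_eq_EMclass]
  have hσ_empty : ∅ ∈ {Ω | MeasurableSet[MeasurableSpace.generateFrom (range F)] Ω} :=
    @MeasurableSet.empty _ (MeasurableSpace.generateFrom (range F))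
  refine EMclass_le (fun Ω hΩ hΩ_fin => ?_)
    (add_nonneg (EMclass_nonneg hf_int ht hσ_empty) (integral_nonneg fun _ => abs_nonneg _))
  calc excessMass f t Ω
      ≤ excessMass (partApprox f F) t Ω + ∫ x, |f x - partApprox f F x| :=
        excessMass_le_add_integral_abs_sub hf_int
          (integrable_partApprox hf_int hF_meas hF_disj hF_cover hF_fin) Ω
    _ ≤ _ := add_le_add_left (excessMass_partApprox_le_EMclass hf_int ht hF_meas hF_disj
          hF_cover hF_fin hΩ hΩ_fin) _

theorem bias_control {d : ℕ} (f : (Fin d → ℝ) → ℝ)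
    (hf_meas : Measurable f) (hf_nonneg : ∀ x, 0 ≤ f x)
    (hf_int : Integrable f) (hf_prob : (∫ x, f x) = 1)
    (C : ℝ) (hf_bdd : ∀ x, f x ≤ C)
    (F : ℕ → Set (Fin d → ℝ))
    (hF_meas : ∀ i, MeasurableSet (F i))
    (hF_disj : Pairwise (Function.onFun Disjoint F))
    (hF_cover : (⋃ i, F i) = Set.univ)
    (hF_pos : ∀ i, 0 < volume (F i)) (hF_fin : ∀ i, volume (F i) ≠ ⊤) :
    ∀ t ∈ Set.Icc (0 : ℝ) (essSup f volume),
      0 ≤ EMstar f t -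
          EMclass f {Ω | MeasurableSet[MeasurableSpace.generateFrom (Set.range F)] Ω} t ∧
      EMstar f t -
          EMclass f {Ω | MeasurableSet[MeasurableSpace.generateFrom (Set.range F)] Ω} t ≤
        ∫ x, |f x - partApprox f F x| :=
  bias_control_general f hf_int F hF_meas hF_disj hF_cover hF_fin
end
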